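/- arXiv:1509.09198 — 2 statements merged into one kernel-verified Lean document; each statement's English description precedes it below -/
import Mathlib

section
/- Zeroth order homogenization (Lemma 1, first part). For every M > 0 and T₀ > 0 there exist constants C > 0 and ε₀ > 0, depending only on l, A, X, Λ, g, c, δ, M and T₀, such that the following holds for every ε ∈ (0, ε₀]: if (U, B) is a bounded C¹ classical solution of the system on ℝ × [0, T₀/ε] whose first-order partial derivatives are bounded in absolute value by M, and if (i) sup_{x∈ℝ} |A U_x(x,0) + g B_x(x,0)| ≤ M ε and (ii) B₀ := B(·,0) lies in W^{1,∞}(ℝ) with ‖B₀‖_{W^{1,∞}} ≤ M, then sup_{x∈ℝ, 0 ≤ t ≤ T₀/ε} |B(x,t) − B₀(x − λ_B^{(0)} ε t)| ≤ C ε. -/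
/-!
The slow variable `Φ = B - ε cᵀA⁻¹U` satisfies `Φ_t + λ ε Φ_x = -λ ε² cᵀA⁻¹U_x` with
`λ = λ_B^{(0)}`, so along a slow characteristic it drifts by `O(ε²) · T₀/ε = O(ε)`. Hence, with
`y = x - λ ε t`, the difference `B(x,t) - B(y,0)` equals `ε cᵀA⁻¹(U(x,t) - U(y,0))` up to `O(ε)`,
and it remains to show that `U` oscillates only by `O(1)`. Write `U = W - B A⁻¹g`. The fast
variable `W` solves `W_t + A W_x = B_t A⁻¹g = O(ε)`, and by (i) `W_x(·,0) = A⁻¹(A U_x + g B_x)(·,0)`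
is `O(ε)`. In the eigenbasis of `A` every component of `W` is transported along its own
characteristic, so over times `T₀/ε` and distances `O(1/ε)` it changes by `O(1)`; and `B` changes
by `O(1)` because `B_t = O(ε)`.
-/

open Matrix Set

variable {E F : Type*} [NormedAddCommGroup E] [NormedSpace ℝ E] [NormedAddCommGroup F]
  [NormedSpace ℝ F]

structure HasPartialDerivsOn (f fx ft : ℝ → ℝ → E) (T : ℝ) : Prop where
  differentiableOn : DifferentiableOn ℝ (fun p : ℝ × ℝ => f p.1 p.2) (univ ×ˢ Icc 0 T)
  hasDerivAt_x : ∀ x, ∀ t ∈ Icc 0 T, HasDerivAt (f · t) (fx x t) x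
  hasDerivWithinAt_t : ∀ x, ∀ t ∈ Icc 0 T, HasDerivWithinAt (f x ·) (ft x t) (Icc 0 T) t

namespace HasPartialDerivsOn

variable {f fx ft : ℝ → ℝ → E} {T : ℝ}

theorem add {g gx gt : ℝ → ℝ → E} (hf : HasPartialDerivsOn f fx ft T)
    (hg : HasPartialDerivsOn g gx gt T) :
    HasPartialDerivsOn (fun x t => f x t + g x t) (fun x t => fx x t + gx x t)
      (fun x t => ft x t + gt x t) T :=
  ⟨hf.1.add hg.1, fun x t ht => (hf.2 x t ht).add (hg.2 x t ht),
    fun x t ht => (hf.3 x t ht).add (hg.3 x t ht)⟩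

theorem smul_const {f fx ft : ℝ → ℝ → ℝ} (hf : HasPartialDerivsOn f fx ft T) (v : E) :
    HasPartialDerivsOn (fun x t => f x t • v) (fun x t => fx x t • v)
      (fun x t => ft x t • v) T :=
  ⟨hf.1.smul_const v, fun x t ht => (hf.2 x t ht).smul_const v,
    fun x t ht => (hf.3 x t ht).smul_const v⟩

theorem sub {g gx gt : ℝ → ℝ → E} (hf : HasPartialDerivsOn f fx ft T)
    (hg : HasPartialDerivsOn g gx gt T) :
    HasPartialDerivsOn (fun x t => f x t - g x t) (fun x t => fx x t - gx x t)
      (fun x t => ft x t - gt x t) T :=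
  ⟨hf.1.sub hg.1, fun x t ht => (hf.2 x t ht).sub (hg.2 x t ht),
    fun x t ht => (hf.3 x t ht).sub (hg.3 x t ht)⟩

theorem const_smul (hf : HasPartialDerivsOn f fx ft T) (a : ℝ) :
    HasPartialDerivsOn (fun x t => a • f x t) (fun x t => a • fx x t) (fun x t => a • ft x t) T :=
  ⟨hf.1.const_smul a, fun x t ht => (hf.2 x t ht).const_smul a,
    fun x t ht => (hf.3 x t ht).const_smul a⟩

theorem clm_comp (L : E →L[ℝ] F) (hf : HasPartialDerivsOn f fx ft T) :
    HasPartialDerivsOn (fun x t => L (f x t)) (fun x t => L (fx x t)) (fun x t => L (ft x t)) T :=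
  ⟨L.differentiable.comp_differentiableOn hf.1,
    fun x t ht => L.hasFDerivAt.comp_hasDerivAt x (hf.2 x t ht),
    fun x t ht => L.hasFDerivAt.comp_hasDerivWithinAt t (hf.3 x t ht)⟩

theorem dotProduct {ι : Type*} [Fintype ι] {f fx ft : ℝ → ℝ → ι → ℝ}
    (hf : HasPartialDerivsOn f fx ft T) (v : ι → ℝ) :
    HasPartialDerivsOn (fun x t => v ⬝ᵥ f x t) (fun x t => v ⬝ᵥ fx x t)
      (fun x t => v ⬝ᵥ ft x t) T :=
  hf.clm_comp (LinearMap.toContinuousLinearMap (dotProductBilin ℝ ℝ v))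

theorem hasDerivWithinAt_line (hf : HasPartialDerivsOn f fx ft T) (hT : 0 < T) (z μ : ℝ) {s : ℝ}
    (hs : s ∈ Icc 0 T) :
    HasDerivWithinAt (fun σ => f (z + μ * σ) σ) (ft (z + μ * s) s + μ • fx (z + μ * s) s)
      (Icc 0 T) s := by
  let p : ℝ × ℝ := (z + μ * s, s)
  have hD := (hf.differentiableOn p ⟨mem_univ _, hs⟩).hasFDerivWithinAt
  set D := fderivWithin ℝ (fun p : ℝ × ℝ => f p.1 p.2) (univ ×ˢ Icc 0 T) p
  have hDx : D (1, 0) = fx p.1 s := by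
    have h := hD.comp_hasDerivWithinAt (s := univ) p.1
      (((hasDerivAt_id p.1).prodMk (hasDerivAt_const p.1 s)).hasDerivWithinAt)
      (fun _ _ => (⟨mem_univ _, hs⟩ : _ ∈ univ ×ˢ Icc 0 T))
    exact uniqueDiffWithinAt_univ.eq_deriv _ h (hf.2 p.1 s hs).hasDerivWithinAt
  have hDt : D (0, 1) = ft p.1 s := by
    have h := hD.comp_hasDerivWithinAt (s := Icc 0 T) s
      (((hasDerivAt_const s p.1).prodMk (hasDerivAt_id s)).hasDerivWithinAt)
      (fun _ hσ => ⟨mem_univ _, hσ⟩)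
    exact (uniqueDiffOn_Icc hT s hs).eq_deriv _ h (hf.3 p.1 s hs)
  have hline : HasDerivAt (fun σ : ℝ => (z + μ * σ, σ)) (μ, 1) s := by
    simpa using (((hasDerivAt_id s).const_mul μ).const_add z).prodMk (hasDerivAt_id s)
  have h := hD.comp_hasDerivWithinAt_of_eq s hline.hasDerivWithinAt
    (fun _ hσ => (⟨mem_univ _, hσ⟩ : _ ∈ univ ×ˢ Icc 0 T)) rfl
  have hμ : ((μ, 1) : ℝ × ℝ) = (0, 1) + μ • (1, 0) := by simp
  rwa [hμ, map_add, map_smul, hDx, hDt] at h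

theorem norm_sub_le_of_transport (hf : HasPartialDerivsOn f fx ft T) (hT : 0 < T) {μ K : ℝ}
    (hK : ∀ x, ∀ t ∈ Icc 0 T, ‖ft x t + μ • fx x t‖ ≤ K) (x : ℝ) {t : ℝ} (ht : t ∈ Icc 0 T) :
    ‖f x t - f (x - μ * t) 0‖ ≤ K * t := by
  simpa using norm_image_sub_le_of_norm_deriv_le_segment'
    (fun s hs => hf.hasDerivWithinAt_line hT (x - μ * t) μ hs)
    (fun s hs => hK _ s (Ico_subset_Icc_self hs)) t ht

theorem norm_sub_le_of_transport_of_initial (hf : HasPartialDerivsOn f fx ft T) (hT : 0 < T)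
    {μ K K₀ : ℝ} (hK : ∀ x, ∀ t ∈ Icc 0 T, ‖ft x t + μ • fx x t‖ ≤ K)
    (hK₀ : ∀ x, ‖fx x 0‖ ≤ K₀) (x y : ℝ) {t : ℝ} (ht : t ∈ Icc 0 T) :
    ‖f x t - f y 0‖ ≤ K * t + K₀ * |x - μ * t - y| := by
  have h0 : (0 : ℝ) ∈ Icc 0 T := ⟨le_rfl, hT.le⟩
  have hinit := convex_univ.norm_image_sub_le_of_norm_hasDerivWithin_le
    (fun z _ => (hf.2 z 0 h0).hasDerivWithinAt) (fun z _ => hK₀ z) (mem_univ y)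
    (mem_univ (x - μ * t))
  calc ‖f x t - f y 0‖ ≤ ‖f x t - f (x - μ * t) 0‖ + ‖f (x - μ * t) 0 - f y 0‖ :=
        norm_sub_le_norm_sub_add_norm_sub _ _ _
    _ ≤ K * t + K₀ * |x - μ * t - y| := by
        rw [← Real.norm_eq_abs]
        exact add_le_add (hf.norm_sub_le_of_transport hT hK x ht) hinit

end HasPartialDerivsOn

theorem abs_dotProduct_le {ι : Type*} [Fintype ι] (v w : ι → ℝ) :
    |v ⬝ᵥ w| ≤ (∑ i, |v i|) * ‖w‖ :=
  calc |v ⬝ᵥ w| ≤ ∑ i, |v i * w i| := Finset.abs_sum_le_sum_abs _ _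
    _ ≤ ∑ i, |v i| * ‖w‖ := by
        gcongr with i
        rw [abs_mul, ← Real.norm_eq_abs (w i)]
        gcongr
        exact norm_le_pi_norm w i
    _ = (∑ i, |v i|) * ‖w‖ := (Finset.sum_mul ..).symm

structure IsClassicalSolution {l : ℕ} (A : Matrix (Fin l) (Fin l) ℝ) (g c : Fin l → ℝ) (ε T : ℝ)
    (U Ux Ut : ℝ → ℝ → Fin l → ℝ) (B Bx Bt : ℝ → ℝ → ℝ) : Prop where
  partialDerivs_U : HasPartialDerivsOn U Ux Ut T
  partialDerivs_B : HasPartialDerivsOn B Bx Bt T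
  eq_U : ∀ x, ∀ t ∈ Icc 0 T, Ut x t + A *ᵥ Ux x t = -Bx x t • g
  eq_B : ∀ x, ∀ t ∈ Icc 0 T, Bt x t + ε * (c ⬝ᵥ Ux x t) = 0

noncomputable def slowVar {l : ℕ} (A : Matrix (Fin l) (Fin l) ℝ) (c : Fin l → ℝ) (ε : ℝ)
    (U : ℝ → ℝ → Fin l → ℝ) (B : ℝ → ℝ → ℝ) (x t : ℝ) : ℝ :=
  B x t - ε * (c ᵥ* A⁻¹ ⬝ᵥ U x t)

noncomputable def fastVar {l : ℕ} (A : Matrix (Fin l) (Fin l) ℝ) (g : Fin l → ℝ)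
    (U : ℝ → ℝ → Fin l → ℝ) (B : ℝ → ℝ → ℝ) (x t : ℝ) : Fin l → ℝ :=
  U x t + B x t • (A⁻¹ *ᵥ g)

section

attribute [local instance] Matrix.linftyOpNormedAddCommGroup

noncomputable def zerothOrderConst {l : ℕ} (A X : Matrix (Fin l) (Fin l) ℝ) (lam g c : Fin l → ℝ)
    (M T₀ : ℝ) : ℝ :=
  |c ⬝ᵥ A⁻¹ *ᵥ g| * (∑ j, |(c ᵥ* A⁻¹) j|) * M * T₀
    + (∑ j, |(c ᵥ* A⁻¹) j|) * (‖X⁻¹‖ * (‖X‖ * (M * ((∑ j, |c j|) * ‖A⁻¹ *ᵥ g‖ * T₀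
        + ‖A⁻¹‖ * (|c ⬝ᵥ A⁻¹ *ᵥ g| * T₀ + ‖lam‖ * T₀)))))
    + |c ᵥ* A⁻¹ ⬝ᵥ (A⁻¹ *ᵥ g)| * ((∑ j, |c j|) * M * T₀ + 2 * M)

variable {l : ℕ} {A X : Matrix (Fin l) (Fin l) ℝ} {lam : Fin l → ℝ}

theorem isUnit_det_of_eq_inv_mul_diagonal_mul (hX : IsUnit X) (hA : A = X⁻¹ * diagonal lam * X)
    (hlam : ∀ i, lam i ≠ 0) : IsUnit A.det := by
  have hXdet := (isUnit_iff_isUnit_det X).mp hX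
  rw [hA, det_mul, det_mul, det_diagonal]
  exact ((isUnit_nonsing_inv_det X hXdet).mul
    (isUnit_iff_ne_zero.mpr (Finset.prod_ne_zero_iff.mpr fun i _ => hlam i))).mul hXdet

theorem mulVec_mulVec_eq_of_eq_inv_mul_diagonal_mul (hX : IsUnit X)
    (hA : A = X⁻¹ * diagonal lam * X) (w : Fin l → ℝ) (k : Fin l) :
    (X *ᵥ (A *ᵥ w)) k = lam k * (X *ᵥ w) k := by
  have hXA : X * A = diagonal lam * X := by
    rw [hA, ← Matrix.mul_assoc, ← Matrix.mul_assoc,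
      mul_nonsing_inv X ((isUnit_iff_isUnit_det X).mp hX), Matrix.one_mul]
  rw [mulVec_mulVec, hXA, ← mulVec_mulVec, mulVec_diagonal]

theorem HasPartialDerivsOn.norm_sub_le_of_eq_inv_mul_diagonal_mul (hX : IsUnit X)
    (hA : A = X⁻¹ * diagonal lam * X) {W Wx Wt : ℝ → ℝ → Fin l → ℝ} {T K K₀ : ℝ}
    (hW : HasPartialDerivsOn W Wx Wt T) (hT : 0 < T)
    (hK : ∀ x, ∀ t ∈ Icc 0 T, ‖Wt x t + A *ᵥ Wx x t‖ ≤ K) (hK₀ : ∀ x, ‖Wx x 0‖ ≤ K₀)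
    (x y : ℝ) {t : ℝ} (ht : t ∈ Icc 0 T) :
    ‖W x t - W y 0‖ ≤ ‖X⁻¹‖ * (‖X‖ * (K * t + K₀ * (|x - y| + ‖lam‖ * t))) := by
  have hK0 : 0 ≤ K := (norm_nonneg _).trans (hK 0 0 ⟨le_rfl, hT.le⟩)
  have hK₀0 : 0 ≤ K₀ := (norm_nonneg _).trans (hK₀ 0)
  have hchar : ∀ k, |(X *ᵥ (W x t - W y 0)) k| ≤ ‖X‖ * (K * t + K₀ * (|x - y| + ‖lam‖ * t)) := by
    intro k
    have hV := (hW.dotProduct (X k)).norm_sub_le_of_transport_of_initial hT (μ := lam k)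
      (K := ‖X‖ * K) (K₀ := ‖X‖ * K₀) ?_ ?_ x y ht
    · have hdist : |x - lam k * t - y| ≤ |x - y| + ‖lam‖ * t := by
        calc |x - lam k * t - y| = |(x - y) - lam k * t| := by ring_nf
          _ ≤ |x - y| + |lam k * t| := abs_sub _ _
          _ = |x - y| + |lam k| * t := by rw [abs_mul, abs_of_nonneg ht.1]
          _ ≤ |x - y| + ‖lam‖ * t := by
              gcongr; exacts [ht.1, norm_le_pi_norm lam k]
      rw [mulVec_sub, Pi.sub_apply]
      calc _ ≤ ‖X‖ * K * t + ‖X‖ * K₀ * |x - lam k * t - y| := hV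
        _ ≤ ‖X‖ * K * t + ‖X‖ * K₀ * (|x - y| + ‖lam‖ * t) := by gcongr
        _ = _ := by ring
    · intro z s hs
      have h := (norm_le_pi_norm (X *ᵥ (Wt z s + A *ᵥ Wx z s)) k).trans
        ((linfty_opNorm_mulVec X _).trans (mul_le_mul_of_nonneg_left (hK z s hs) (norm_nonneg X)))
      rwa [mulVec_add, Pi.add_apply, mulVec_mulVec_eq_of_eq_inv_mul_diagonal_mul hX hA] at h
    · intro z
      exact (norm_le_pi_norm (X *ᵥ Wx z 0) k).trans
        ((linfty_opNorm_mulVec X _).trans (mul_le_mul_of_nonneg_left (hK₀ z) (norm_nonneg X)))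
  have hXW : ‖X *ᵥ (W x t - W y 0)‖ ≤ ‖X‖ * (K * t + K₀ * (|x - y| + ‖lam‖ * t)) :=
    (pi_norm_le_iff_of_nonneg (by have := ht.1; positivity)).mpr hchar
  calc ‖W x t - W y 0‖ = ‖X⁻¹ *ᵥ (X *ᵥ (W x t - W y 0))‖ := by
        rw [mulVec_mulVec, nonsing_inv_mul X ((isUnit_iff_isUnit_det X).mp hX), one_mulVec]
    _ ≤ ‖X⁻¹‖ * ‖X *ᵥ (W x t - W y 0)‖ := linfty_opNorm_mulVec _ _
    _ ≤ _ := by gcongr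

variable {g c : Fin l → ℝ} {ε T M T₀ : ℝ}
  {U Ux Ut : ℝ → ℝ → Fin l → ℝ} {B Bx Bt : ℝ → ℝ → ℝ}

theorem zerothOrderConst_nonneg (hM : 0 ≤ M) (hT₀ : 0 ≤ T₀) :
    0 ≤ zerothOrderConst A X lam g c M T₀ := by
  unfold zerothOrderConst
  positivity

namespace IsClassicalSolution

theorem abs_Bt_le (hs : IsClassicalSolution A g c ε T U Ux Ut B Bx Bt) (hε : 0 ≤ ε)
    (hUx : ∀ x, ∀ t ∈ Icc 0 T, ‖Ux x t‖ ≤ M) {x t : ℝ} (ht : t ∈ Icc 0 T) :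
    |Bt x t| ≤ ε * ((∑ j, |c j|) * M) := by
  rw [eq_neg_of_add_eq_zero_left (hs.eq_B x t ht), abs_neg, abs_mul, abs_of_nonneg hε]
  gcongr
  exact (abs_dotProduct_le c (Ux x t)).trans (by gcongr; exact hUx x t ht)

theorem abs_B_sub_le (hs : IsClassicalSolution A g c ε T U Ux Ut B Bx Bt) (hT : 0 < T)
    (hε : 0 ≤ ε) (hUx : ∀ x, ∀ t ∈ Icc 0 T, ‖Ux x t‖ ≤ M) (hB₀ : ∀ x, |B x 0| ≤ M) (x y : ℝ)
    {t : ℝ} (ht : t ∈ Icc 0 T) (hεt : ε * t ≤ T₀) :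
    |B x t - B y 0| ≤ (∑ j, |c j|) * M * T₀ + 2 * M := by
  have hM : 0 ≤ M := (abs_nonneg _).trans (hB₀ 0)
  have hdrift := hs.partialDerivs_B.norm_sub_le_of_transport hT (μ := 0)
    (fun z s hs' => by simpa using hs.abs_Bt_le hε hUx hs') x ht
  simp only [zero_mul, sub_zero, Real.norm_eq_abs] at hdrift
  calc |B x t - B y 0| ≤ |B x t - B x 0| + (|B x 0| + |B y 0|) :=
        (abs_sub_le _ _ _).trans (by gcongr; exact abs_sub _ _)
    _ ≤ (∑ j, |c j|) * M * (ε * t) + (M + M) := by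
        gcongr
        · linarith
        exacts [hB₀ x, hB₀ y]
    _ ≤ (∑ j, |c j|) * M * T₀ + 2 * M := by
        rw [← two_mul]; gcongr

theorem abs_slowVar_sub_le (hs : IsClassicalSolution A g c ε T U Ux Ut B Bx Bt) (hT : 0 < T)
    (hA : IsUnit A.det) (hε : 0 ≤ ε) (hUx : ∀ x, ∀ t ∈ Icc 0 T, ‖Ux x t‖ ≤ M) (x : ℝ) {t : ℝ}
    (ht : t ∈ Icc 0 T) (hεt : ε * t ≤ T₀) :
    |slowVar A c ε U B x t - slowVar A c ε U B (x - -(c ⬝ᵥ A⁻¹ *ᵥ g) * ε * t) 0|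
      ≤ ε * (|c ⬝ᵥ A⁻¹ *ᵥ g| * (∑ j, |(c ᵥ* A⁻¹) j|) * M * T₀) := by
  set r := c ᵥ* A⁻¹
  have hrA : ∀ u, r ⬝ᵥ (A *ᵥ u) = c ⬝ᵥ u := fun u => by
    rw [dotProduct_mulVec, vecMul_vecMul, nonsing_inv_mul A hA, vecMul_one]
  have hΦ : HasPartialDerivsOn (slowVar A c ε U B) (slowVar A c ε Ux Bx) (slowVar A c ε Ut Bt) T :=
    hs.partialDerivs_B.sub ((hs.partialDerivs_U.dotProduct r).const_smul ε)
  have hcharacteristic : ∀ z, ∀ s ∈ Icc 0 T,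
      slowVar A c ε Ut Bt z s + (-(c ⬝ᵥ A⁻¹ *ᵥ g) * ε) • slowVar A c ε Ux Bx z s
        = (c ⬝ᵥ A⁻¹ *ᵥ g) * ε ^ 2 * (r ⬝ᵥ Ux z s) := by
    intro z s hs'
    have hUt : r ⬝ᵥ Ut z s = -(Bx z s * (r ⬝ᵥ g)) - c ⬝ᵥ Ux z s := by
      rw [eq_sub_of_add_eq (hs.eq_U z s hs'), dotProduct_sub, dotProduct_smul, hrA]
      simp [smul_eq_mul, mul_comm]
    rw [dotProduct_mulVec, smul_eq_mul]
    simp only [slowVar]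
    rw [hUt, eq_neg_of_add_eq_zero_left (hs.eq_B z s hs')]
    ring
  have h := hΦ.norm_sub_le_of_transport hT (μ := -(c ⬝ᵥ A⁻¹ *ᵥ g) * ε)
    (K := |c ⬝ᵥ A⁻¹ *ᵥ g| * ε ^ 2 * ((∑ j, |r j|) * M))
    (fun z s hs' => by
      rw [hcharacteristic z s hs', Real.norm_eq_abs, abs_mul, abs_mul, abs_of_nonneg (sq_nonneg ε)]
      gcongr
      exact (abs_dotProduct_le r _).trans (by gcongr; exact hUx z s hs')) x ht
  rw [Real.norm_eq_abs] at h
  refine h.trans ?_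
  have hM : 0 ≤ M := (norm_nonneg _).trans (hUx 0 0 ⟨le_rfl, hT.le⟩)
  calc |c ⬝ᵥ A⁻¹ *ᵥ g| * ε ^ 2 * ((∑ j, |r j|) * M) * t
      = ε * (|c ⬝ᵥ A⁻¹ *ᵥ g| * (∑ j, |r j|) * M * (ε * t)) := by ring
    _ ≤ ε * (|c ⬝ᵥ A⁻¹ *ᵥ g| * (∑ j, |r j|) * M * T₀) := by gcongr

theorem norm_fastVar_sub_le (hs : IsClassicalSolution A g c ε T U Ux Ut B Bx Bt) (hT : 0 < T)
    (hX : IsUnit X) (hAX : A = X⁻¹ * diagonal lam * X) (hA : IsUnit A.det) (hε : 0 ≤ ε)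
    (hUx : ∀ x, ∀ t ∈ Icc 0 T, ‖Ux x t‖ ≤ M)
    (hsteady : ∀ x, ‖A *ᵥ Ux x 0 + Bx x 0 • g‖ ≤ M * ε) (x y : ℝ) {t : ℝ}
    (ht : t ∈ Icc 0 T) (hεt : ε * t ≤ T₀) :
    ‖fastVar A g U B x t - fastVar A g U B y 0‖ ≤ ‖X⁻¹‖ * (‖X‖ * (M * ((∑ j, |c j|) *
      ‖A⁻¹ *ᵥ g‖ * T₀ + ‖A⁻¹‖ * (ε * |x - y| + ‖lam‖ * T₀)))) := by
  have hM : 0 ≤ M := (norm_nonneg _).trans (hUx 0 0 ⟨le_rfl, hT.le⟩)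
  have hW : HasPartialDerivsOn (fastVar A g U B) (fastVar A g Ux Bx) (fastVar A g Ut Bt) T :=
    hs.partialDerivs_U.add (hs.partialDerivs_B.smul_const _)
  have hsource : ∀ z, ∀ s ∈ Icc 0 T,
      fastVar A g Ut Bt z s + A *ᵥ fastVar A g Ux Bx z s = Bt z s • (A⁻¹ *ᵥ g) := by
    intro z s hs'
    simp only [fastVar]
    rw [mulVec_add, mulVec_smul, mulVec_mulVec, mul_nonsing_inv A hA, one_mulVec]
    linear_combination (norm := module) hs.eq_U z s hs'
  have hinit : ∀ z, fastVar A g Ux Bx z 0 = A⁻¹ *ᵥ (A *ᵥ Ux z 0 + Bx z 0 • g) := by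
    intro z
    rw [mulVec_add, mulVec_mulVec, nonsing_inv_mul A hA, one_mulVec, mulVec_smul]
    rfl
  have h := hW.norm_sub_le_of_eq_inv_mul_diagonal_mul hX hAX hT
    (K := ε * ((∑ j, |c j|) * M) * ‖A⁻¹ *ᵥ g‖) (K₀ := ‖A⁻¹‖ * (M * ε))
    (fun z s hs' => by
      rw [hsource z s hs', norm_smul, Real.norm_eq_abs]
      gcongr
      exact hs.abs_Bt_le hε hUx hs')
    (fun z => by
      rw [hinit z]
      exact (linfty_opNorm_mulVec _ _).trans (by gcongr; exact hsteady z)) x y ht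
  refine h.trans ?_
  gcongr ‖X⁻¹‖ * (‖X‖ * ?_)
  calc ε * ((∑ j, |c j|) * M) * ‖A⁻¹ *ᵥ g‖ * t + ‖A⁻¹‖ * (M * ε) * (|x - y| + ‖lam‖ * t)
      = M * ((∑ j, |c j|) * ‖A⁻¹ *ᵥ g‖ * (ε * t) + ‖A⁻¹‖ * (ε * |x - y| + ‖lam‖ * (ε * t))) := by
        ring
    _ ≤ _ := by gcongr

theorem abs_sub_le_mul_zerothOrderConst (hs : IsClassicalSolution A g c ε T U Ux Ut B Bx Bt)
    (hT : 0 < T) (hX : IsUnit X) (hAX : A = X⁻¹ * diagonal lam * X) (hA : IsUnit A.det)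
    (hε : 0 < ε) (hε₁ : ε ≤ 1) (hUx : ∀ x, ∀ t ∈ Icc 0 T, ‖Ux x t‖ ≤ M)
    (hsteady : ∀ x, ‖A *ᵥ Ux x 0 + Bx x 0 • g‖ ≤ M * ε) (hB₀ : ∀ x, |B x 0| ≤ M) (x : ℝ)
    {t : ℝ} (ht : t ∈ Icc 0 T) (hεt : ε * t ≤ T₀) :
    |B x t - B (x - -(c ⬝ᵥ A⁻¹ *ᵥ g) * ε * t) 0| ≤ ε * zerothOrderConst A X lam g c M T₀ := by
  set y := x - -(c ⬝ᵥ A⁻¹ *ᵥ g) * ε * t with hy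
  set r := c ᵥ* A⁻¹
  have hslow := hs.abs_slowVar_sub_le hT hA hε.le hUx x ht hεt
  have hfast := hs.norm_fastVar_sub_le hT hX hAX hA hε.le hUx hsteady x y ht hεt
  have hB := hs.abs_B_sub_le hT hε.le hUx hB₀ x y ht hεt
  have hdist : ε * |x - y| ≤ |c ⬝ᵥ A⁻¹ *ᵥ g| * T₀ := by
    have hxy : |x - y| = |c ⬝ᵥ A⁻¹ *ᵥ g| * (ε * t) := by
      rw [hy, sub_sub_cancel, neg_mul, neg_mul, abs_neg, mul_assoc, abs_mul,
        abs_of_nonneg (mul_nonneg hε.le ht.1)]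
    calc ε * |x - y| ≤ |x - y| := mul_le_of_le_one_left (abs_nonneg _) hε₁
      _ ≤ |c ⬝ᵥ A⁻¹ *ᵥ g| * T₀ := by rw [hxy]; gcongr
  have hsplit : B x t - B y 0 = (slowVar A c ε U B x t - slowVar A c ε U B y 0)
      + ε * (r ⬝ᵥ (fastVar A g U B x t - fastVar A g U B y 0))
      - ε * (r ⬝ᵥ (A⁻¹ *ᵥ g)) * (B x t - B y 0) := by
    simp only [slowVar, fastVar, dotProduct_sub, dotProduct_add, dotProduct_smul, smul_eq_mul]
    ring
  calc |B x t - B y 0|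
    _ ≤ |slowVar A c ε U B x t - slowVar A c ε U B y 0|
          + ε * ((∑ j, |r j|) * ‖fastVar A g U B x t - fastVar A g U B y 0‖)
          + ε * (|r ⬝ᵥ (A⁻¹ *ᵥ g)| * |B x t - B y 0|) := by
      conv_lhs => rw [hsplit]
      refine (abs_sub _ _).trans (add_le_add ((abs_add_le _ _).trans (add_le_add le_rfl ?_)) ?_)
      · rw [abs_mul, abs_of_pos hε]
        gcongr
        exact abs_dotProduct_le _ _
      · rw [abs_mul, abs_mul, abs_of_pos hε, mul_assoc]
    _ ≤ ε * zerothOrderConst A X lam g c M T₀ := by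
      rw [zerothOrderConst, mul_add, mul_add]
      rw [← hy] at hslow
      have hM : 0 ≤ M := (abs_nonneg _).trans (hB₀ 0)
      gcongr
      exact hfast.trans (by gcongr)

end IsClassicalSolution

end

theorem stmt_0_general (l : ℕ) (A X : Matrix (Fin l) (Fin l) ℝ) (lam : Fin l → ℝ)
    (g c : Fin l → ℝ) (δ : ℝ) (hδ : 0 < δ)
    (hX : IsUnit X) (hA : A = X⁻¹ * Matrix.diagonal lam * X)
    (hlam : ∀ i : Fin l, δ ≤ |lam i|)
    (M T₀ : ℝ) (hM : 0 < M) (hT₀ : 0 < T₀) :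
    ∃ C > 0, ∃ ε₀ > 0, ∀ ε : ℝ, 0 < ε → ε ≤ ε₀ →
      ∀ (U : ℝ → ℝ → Fin l → ℝ) (B : ℝ → ℝ → ℝ)
        (Ux Ut : ℝ → ℝ → Fin l → ℝ) (Bx Bt : ℝ → ℝ → ℝ),
        -- (U, B) is a C¹ classical solution on ℝ × [0, T₀/ε]
        (∀ x : ℝ, ∀ t ∈ Icc (0 : ℝ) (T₀ / ε),
          HasDerivAt (fun x' => U x' t) (Ux x t) x ∧
          HasDerivWithinAt (fun t' => U x t') (Ut x t) (Icc 0 (T₀ / ε)) t ∧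
          HasDerivAt (fun x' => B x' t) (Bx x t) x ∧
          HasDerivWithinAt (fun t' => B x t') (Bt x t) (Icc 0 (T₀ / ε)) t) →
        -- joint C¹ regularity of the solution on ℝ × [0, T₀/ε]
        ContDiffOn ℝ 1 (fun p : ℝ × ℝ => U p.1 p.2)
          (univ ×ˢ Icc (0:ℝ) (T₀ / ε)) →
        ContDiffOn ℝ 1 (fun p : ℝ × ℝ => B p.1 p.2)
          (univ ×ˢ Icc (0:ℝ) (T₀ / ε)) →
        -- boundedness of the solution
        (∃ K : ℝ, ∀ x : ℝ, ∀ t ∈ Icc (0 : ℝ) (T₀ / ε),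
          ‖U x t‖ ≤ K ∧ |B x t| ≤ K) →
        -- first-order partial derivatives bounded by M
        (∀ x : ℝ, ∀ t ∈ Icc (0 : ℝ) (T₀ / ε),
          ‖Ux x t‖ ≤ M ∧ ‖Ut x t‖ ≤ M ∧ |Bx x t| ≤ M ∧ |Bt x t| ≤ M) →
        -- the linear hyperbolic system
        (∀ x : ℝ, ∀ t ∈ Icc (0 : ℝ) (T₀ / ε),
          Ut x t + A.mulVec (Ux x t) = -(Bx x t) • g ∧
          Bt x t + ε * (c ⬝ᵥ Ux x t) = 0) →
        -- (i) approximate steadiness of the initial data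
        (∀ x : ℝ, ‖A.mulVec (Ux x 0) + Bx x 0 • g‖ ≤ M * ε) →
        -- (ii) B₀ = B(·,0) ∈ W^{1,∞}(ℝ) with norm ≤ M
        (∀ x : ℝ, |B x 0| ≤ M ∧ |Bx x 0| ≤ M) →
        ∀ x : ℝ, ∀ t ∈ Icc (0 : ℝ) (T₀ / ε),
          |B x t - B (x - -(c ⬝ᵥ A⁻¹.mulVec g) * ε * t) 0| ≤ C * ε := by
  have hAdet : IsUnit A.det :=
    isUnit_det_of_eq_inv_mul_diagonal_mul hX hA fun i => abs_pos.mp (hδ.trans_le (hlam i))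
  refine ⟨zerothOrderConst A X lam g c M T₀ + 1,
    add_pos_of_nonneg_of_pos (zerothOrderConst_nonneg hM.le hT₀.le) one_pos, 1, one_pos, ?_⟩
  intro ε hε hε₁ U B Ux Ut Bx Bt hderiv hCU hCB _ hbounds hsys hsteady hinit x t ht
  have hs : IsClassicalSolution A g c ε (T₀ / ε) U Ux Ut B Bx Bt :=
    ⟨⟨hCU.differentiableOn one_ne_zero, fun x t ht => (hderiv x t ht).1,
        fun x t ht => (hderiv x t ht).2.1⟩,
      ⟨hCB.differentiableOn one_ne_zero, fun x t ht => (hderiv x t ht).2.2.1,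
        fun x t ht => (hderiv x t ht).2.2.2⟩,
      fun x t ht => (hsys x t ht).1, fun x t ht => (hsys x t ht).2⟩
  calc _ ≤ ε * zerothOrderConst A X lam g c M T₀ :=
        hs.abs_sub_le_mul_zerothOrderConst (div_pos hT₀ hε) hX hA hAdet hε hε₁
          (fun x t ht => (hbounds x t ht).1) hsteady (fun x => (hinit x).1) x ht
          ((le_div_iff₀' hε).mp ht.2)
    _ ≤ (zerothOrderConst A X lam g c M T₀ + 1) * ε := by linarith

/-- Zeroth order homogenization (Lemma 1, first part) for the linear system
`U_t + A U_x = −g B_x`, `B_t + ε cᵀ U_x = 0`, with `A = X⁻¹ Λ X`, `Λ` real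
diagonal with pairwise distinct eigenvalues of modulus at least `δ > 0`.
For all `M, T₀ > 0` there are `C, ε₀ > 0`, depending only on the data
`l, A, X, Λ, g, c, δ, M, T₀`, such that for every `ε ∈ (0, ε₀]` and every
bounded `C¹` solution on `ℝ × [0, T₀/ε]` with first derivatives bounded by
`M`, initial approximate steadiness `|A U_x(·,0) + g B_x(·,0)| ≤ M ε`, and
`B₀ = B(·,0) ∈ W^{1,∞}` with norm at most `M`, the riverbed stays within
`C ε` of the zeroth order prediction `B₀(x − λ_B⁰ ε t)`,
`λ_B⁰ = −cᵀ A⁻¹ g`, for all `t ∈ [0, T₀/ε]`. -/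
theorem stmt_0 (l : ℕ) (A X : Matrix (Fin l) (Fin l) ℝ) (lam : Fin l → ℝ)
    (g c : Fin l → ℝ) (δ : ℝ) (hδ : 0 < δ)
    (hX : IsUnit X) (hA : A = X⁻¹ * Matrix.diagonal lam * X)
    (hdistinct : ∀ i j : Fin l, i ≠ j → lam i ≠ lam j)
    (hlam : ∀ i : Fin l, δ ≤ |lam i|)
    (M T₀ : ℝ) (hM : 0 < M) (hT₀ : 0 < T₀) :
    ∃ C > 0, ∃ ε₀ > 0, ∀ ε : ℝ, 0 < ε → ε ≤ ε₀ →
      ∀ (U : ℝ → ℝ → Fin l → ℝ) (B : ℝ → ℝ → ℝ)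
        (Ux Ut : ℝ → ℝ → Fin l → ℝ) (Bx Bt : ℝ → ℝ → ℝ),
        -- (U, B) is a C¹ classical solution on ℝ × [0, T₀/ε]
        (∀ x : ℝ, ∀ t ∈ Icc (0 : ℝ) (T₀ / ε),
          HasDerivAt (fun x' => U x' t) (Ux x t) x ∧
          HasDerivWithinAt (fun t' => U x t') (Ut x t) (Icc 0 (T₀ / ε)) t ∧
          HasDerivAt (fun x' => B x' t) (Bx x t) x ∧
          HasDerivWithinAt (fun t' => B x t') (Bt x t) (Icc 0 (T₀ / ε)) t) →
        -- joint C¹ regularity of the solution on ℝ × [0, T₀/ε]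
        ContDiffOn ℝ 1 (fun p : ℝ × ℝ => U p.1 p.2)
          (univ ×ˢ Icc (0:ℝ) (T₀ / ε)) →
        ContDiffOn ℝ 1 (fun p : ℝ × ℝ => B p.1 p.2)
          (univ ×ˢ Icc (0:ℝ) (T₀ / ε)) →
        -- boundedness of the solution
        (∃ K : ℝ, ∀ x : ℝ, ∀ t ∈ Icc (0 : ℝ) (T₀ / ε),
          ‖U x t‖ ≤ K ∧ |B x t| ≤ K) →
        -- first-order partial derivatives bounded by M
        (∀ x : ℝ, ∀ t ∈ Icc (0 : ℝ) (T₀ / ε),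
          ‖Ux x t‖ ≤ M ∧ ‖Ut x t‖ ≤ M ∧ |Bx x t| ≤ M ∧ |Bt x t| ≤ M) →
        -- the linear hyperbolic system
        (∀ x : ℝ, ∀ t ∈ Icc (0 : ℝ) (T₀ / ε),
          Ut x t + A.mulVec (Ux x t) = -(Bx x t) • g ∧
          Bt x t + ε * (c ⬝ᵥ Ux x t) = 0) →
        -- (i) approximate steadiness of the initial data
        (∀ x : ℝ, ‖A.mulVec (Ux x 0) + Bx x 0 • g‖ ≤ M * ε) →
        -- (ii) B₀ = B(·,0) ∈ W^{1,∞}(ℝ) with norm ≤ M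
        (∀ x : ℝ, |B x 0| ≤ M ∧ |Bx x 0| ≤ M) →
        ∀ x : ℝ, ∀ t ∈ Icc (0 : ℝ) (T₀ / ε),
          |B x t - B (x - -(c ⬝ᵥ A⁻¹.mulVec g) * ε * t) 0| ≤ C * ε :=
  stmt_0_general l A X lam g c δ hδ hX hA hlam M T₀ hM hT₀
end

section
/- Propagation of approximate steadiness (intermediate claim in the proof of Lemma 1). For every M > 0 and T₀ > 0 there exist C > 0 and ε₀ > 0, depending only on l, A, X, Λ, g, c, δ, M and T₀, such that the following holds for every ε ∈ (0, ε₀]: if (U, B) is a bounded C¹ solution of the system on ℝ × [0, T₀/ε] with first-order partial derivatives bounded by M, and sup_x |A U_x(x,0) + g B_x(x,0)| ≤ M ε, then sup_{x∈ℝ, 0 ≤ t ≤ T₀/ε} |A U_x(x,t) + g B_x(x,t)| ≤ C ε; equivalently, sup_{x, t} |U_t(x,t)| ≤ C ε on ℝ × [0, T₀/ε]. -/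
open Matrix Set

/-!
Row `i` of `K^ε` is a left eigenvector `(r, b)` of `C^ε` with eigenvalue `d = λᵢ + ε λ̂ᵢ`, so
`y = r ⬝ U + b B` solves `y_t + d y_x = 0`; it is therefore constant along the characteristics
`x - d t = const`, and so is `y_x = r ⬝ U_x + b B_x`.
Since `X A = Λ X` and `λᵢ b = (X g)ᵢ + O(ε)`, `λᵢ y_x` equals `(X (A U_x + g B_x))ᵢ` up to an
error `ε λᵢ (X̂ᵢ ⬝ U_x + α̂ᵢ B_x) = O(ε)`. Hence `X (A U_x + g B_x)` stays within `O(ε)` of its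
initial size `O(ε)`, and `U_t = -(A U_x + g B_x) = -X⁻¹ X (A U_x + g B_x)` is `O(ε)` as well.
-/

section Transport

variable {T d : ℝ} {f fx ft : ℝ → ℝ → ℝ}

theorem HasFDerivWithinAt.apply_eq_of_partials (hT : 0 < T) {L : ℝ × ℝ →L[ℝ] ℝ} {x t : ℝ}
    (ht : t ∈ Icc 0 T)
    (hL : HasFDerivWithinAt (fun p : ℝ × ℝ => f p.1 p.2) L (univ ×ˢ Icc 0 T) (x, t))
    (hfx : HasDerivAt (fun x' => f x' t) (fx x t) x)
    (hft : HasDerivWithinAt (fun t' => f x t') (ft x t) (Icc 0 T) t) (v : ℝ × ℝ) :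
    L v = v.1 * fx x t + v.2 * ft x t := by
  have h10 : L (1, 0) = fx x t := by
    have hγ := (hasDerivAt_id x).prodMk (hasDerivAt_const x t)
    have := hL.comp_hasDerivWithinAt x (hγ.hasDerivWithinAt (s := univ))
      fun _ _ => mk_mem_prod (mem_univ _) ht
    exact (hasDerivWithinAt_univ.mp this).unique hfx
  have h01 : L (0, 1) = ft x t := by
    have hγ := (hasDerivAt_const t x).prodMk (hasDerivAt_id t)
    exact (uniqueDiffOn_Icc hT t ht).eq_deriv _
      (hL.comp_hasDerivWithinAt t hγ.hasDerivWithinAt fun _ hu => ⟨mem_univ _, hu⟩) hft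
  calc L v = L (v.1 • (1, 0) + v.2 • (0, 1)) := by congr 1; ext <;> simp
    _ = v.1 * fx x t + v.2 * ft x t := by
      rw [map_add, map_smul, map_smul, h10, h01, smul_eq_mul, smul_eq_mul]

theorem eq_initial_of_transport (hT : 0 < T)
    (hC1 : ContDiffOn ℝ 1 (fun p : ℝ × ℝ => f p.1 p.2) (univ ×ˢ Icc 0 T))
    (hfx : ∀ x, ∀ t ∈ Icc 0 T, HasDerivAt (fun x' => f x' t) (fx x t) x)
    (hft : ∀ x, ∀ t ∈ Icc 0 T, HasDerivWithinAt (fun t' => f x t') (ft x t) (Icc 0 T) t)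
    (hpde : ∀ x, ∀ t ∈ Icc 0 T, ft x t + d * fx x t = 0) {x t : ℝ} (ht : t ∈ Icc 0 T) :
    f x t = f (x - d * t) 0 := by
  set γ : ℝ → ℝ × ℝ := fun s => (x - d * (t - s), s)
  have hconst : ∀ s ∈ Icc 0 t,
      HasDerivWithinAt ((fun p : ℝ × ℝ => f p.1 p.2) ∘ γ) 0 (Icc 0 t) s := by
    intro s hs
    have hsT : s ∈ Icc 0 T := ⟨hs.1, hs.2.trans ht.2⟩
    have hL := ((hC1.differentiableOn one_ne_zero) (γ s) ⟨mem_univ _, hsT⟩).hasFDerivWithinAt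
    have hγ : HasDerivAt γ (d, 1) s := by
      refine HasDerivAt.prodMk ?_ (hasDerivAt_id s)
      simpa using (((hasDerivAt_id s).const_sub t).const_mul d).const_sub x
    have := hL.comp_hasDerivWithinAt s (hγ.hasDerivWithinAt (s := Icc 0 t))
      fun u hu => ⟨mem_univ _, hu.1, hu.2.trans ht.2⟩
    rw [hL.apply_eq_of_partials hT hsT (hfx _ s hsT) (hft _ s hsT)] at this
    simpa [add_comm, hpde _ s hsT] using this
  have := (convex_Icc 0 t).norm_image_sub_le_of_norm_hasDerivWithin_le (C := 0) hconst
    (fun _ _ => by simp) (left_mem_Icc.2 ht.1) (right_mem_Icc.2 ht.1)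
  simpa [γ, sub_eq_zero] using this

theorem hasDerivAt_eq_initial_of_transport (hT : 0 < T)
    (hC1 : ContDiffOn ℝ 1 (fun p : ℝ × ℝ => f p.1 p.2) (univ ×ˢ Icc 0 T))
    (hfx : ∀ x, ∀ t ∈ Icc 0 T, HasDerivAt (fun x' => f x' t) (fx x t) x)
    (hft : ∀ x, ∀ t ∈ Icc 0 T, HasDerivWithinAt (fun t' => f x t') (ft x t) (Icc 0 T) t)
    (hpde : ∀ x, ∀ t ∈ Icc 0 T, ft x t + d * fx x t = 0) {x t : ℝ} (ht : t ∈ Icc 0 T) :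
    fx x t = fx (x - d * t) 0 := by
  -- `fx` need not be differentiable, so differentiate `f x t = f (x - d * t) 0` in `x` instead.
  have hshift : (fun x' => f (x' - d * t) 0) = fun x' => f x' t :=
    funext fun x' => (eq_initial_of_transport hT hC1 hfx hft hpde ht).symm
  have := (hfx (x - d * t) 0 (left_mem_Icc.2 hT.le)).comp x
    ((hasDerivAt_id x).sub_const (d * t))
  rw [mul_one] at this
  exact (hfx x t ht).unique (hshift ▸ this)

end Transport

section Matrix

variable {n : Type*} [Fintype n]

theorem Matrix.mul_eq_mul_of_eq_nonsing_inv_mul_mul {α : Type*} [CommRing α] [DecidableEq n]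
    {A D P : Matrix n n α} (hP : IsUnit P) (h : A = P⁻¹ * D * P) : P * A = D * P := by
  rw [h, ← Matrix.mul_assoc, ← Matrix.mul_assoc,
    mul_nonsing_inv _ ((isUnit_iff_isUnit_det P).mp hP), Matrix.one_mul]

theorem Matrix.mul_inv_diagonal_mulVec_apply {α : Type*} [Field α] [DecidableEq n] {d : n → α}
    (hd : ∀ i, d i ≠ 0) (v : n → α) (i : n) : d i * ((diagonal d)⁻¹ *ᵥ v) i = v i := by
  have hdet : IsUnit (diagonal d).det := (isUnit_iff_isUnit_det _).mp
    (isUnit_diagonal.mpr (Pi.isUnit_iff.mpr fun i => (hd i).isUnit))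
  rw [← mulVec_diagonal, mulVec_mulVec, mul_nonsing_inv _ hdet, one_mulVec]

section
attribute [local instance] Matrix.linftyOpSeminormedAddCommGroup

theorem Matrix.exists_norm_mulVec_le {m : Type*} [Fintype m] (X : Matrix m n ℝ) :
    ∃ K, 0 ≤ K ∧ ∀ v, ‖X *ᵥ v‖ ≤ K * ‖v‖ :=
  ⟨‖X‖, norm_nonneg _, linfty_opNorm_mulVec X⟩

end

theorem abs_dotProduct_add_mul_le {v u : n → ℝ} {α s M : ℝ} (hv : ∀ k, |v k| ≤ M)
    (hu : ‖u‖ ≤ M) (hα : |α| ≤ M) (hs : |s| ≤ M) :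
    |v ⬝ᵥ u + α * s| ≤ (Fintype.card n + 1) * (M * M) := by
  have hM : 0 ≤ M := (abs_nonneg _).trans hα
  have hdot : |v ⬝ᵥ u| ≤ Fintype.card n * (M * M) :=
    calc |v ⬝ᵥ u| ≤ ∑ k, |v k| * |u k| := by
          simpa only [dotProduct, abs_mul] using Finset.abs_sum_le_sum_abs (fun k => v k * u k) _
      _ ≤ ∑ _k : n, M * M := Finset.sum_le_sum fun k _ =>
          mul_le_mul (hv k) ((norm_le_pi_norm u k).trans hu) (abs_nonneg _) hM
      _ = Fintype.card n * (M * M) := by simp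
  calc |v ⬝ᵥ u + α * s| ≤ |v ⬝ᵥ u| + |α| * |s| := (abs_add_le _ _).trans_eq (by rw [abs_mul])
    _ ≤ Fintype.card n * (M * M) + M * M := by gcongr
    _ = (Fintype.card n + 1) * (M * M) := by ring

theorem vecMul_eq_and_dotProduct_eq_of_fromBlocks_mul_eq {α : Type*} [CommRing α]
    [DecidableEq n] {R A : Matrix n n α} {b g c d : n → α} {K₂₁ : Matrix Unit n α}
    {K₂₂ D₂₂ : Matrix Unit Unit α} {ε : α}
    (h : fromBlocks R (of fun i _ => b i) K₂₁ K₂₂ *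
        fromBlocks A (of fun i _ => g i) (of fun _ j => ε * c j) 0 =
      fromBlocks (diagonal d) 0 0 D₂₂ * fromBlocks R (of fun i _ => b i) K₂₁ K₂₂) (i : n) :
    R i ᵥ* A + (b i * ε) • c = d i • R i ∧ R i ⬝ᵥ g = d i * b i := by
  simp only [fromBlocks_multiply, fromBlocks_inj] at h
  obtain ⟨h₁₁, h₁₂, -, -⟩ := h
  constructor
  · ext j
    simpa [mul_apply, vecMul, dotProduct, diagonal_apply, mul_assoc] using
      congrFun (congrFun h₁₁ i) j
  · simpa [mul_apply, dotProduct, diagonal_apply] using congrFun (congrFun h₁₂ i) ()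

theorem mul_perturbed_row_dotProduct_eq {R : Type*} [CommRing R] [DecidableEq n]
    {X Y A : Matrix n n R} {lam g u : n → R} {i : n} {b α ε s : R} (hXA : X * A = diagonal lam * X)
    (hb : lam i * b = (X *ᵥ g) i + ε * (lam i * α)) :
    lam i * ((X + ε • Y) i ⬝ᵥ u + b * s) =
      (X *ᵥ (A *ᵥ u + s • g)) i + ε * (lam i * (Y i ⬝ᵥ u + α * s)) := by
  have hXAu : (X *ᵥ (A *ᵥ u)) i = lam i * (X i ⬝ᵥ u) := by
    rw [mulVec_mulVec, hXA, ← mulVec_mulVec, mulVec_diagonal]; rfl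
  change lam i * ((X i + ε • Y i) ⬝ᵥ u + b * s) = _
  rw [mulVec_add, mulVec_smul, Pi.add_apply, hXAu, Pi.smul_apply, smul_eq_mul, add_dotProduct,
    smul_dotProduct, smul_eq_mul]
  linear_combination s * hb

theorem dotProduct_transport_of_left_eigen {R : Type*} [CommRing R] {A : Matrix n n R}
    {g c r ux ut : n → R} {b d ε bx bt : R} (hrow : r ᵥ* A + (b * ε) • c = d • r)
    (hcol : r ⬝ᵥ g = d * b)
    (hU : ut + A *ᵥ ux = -bx • g) (hB : bt + ε * (c ⬝ᵥ ux) = 0) :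
    (r ⬝ᵥ ut + b * bt) + d * (r ⬝ᵥ ux + b * bx) = 0 := by
  have h₁ := congrArg (r ⬝ᵥ ·) hU
  have h₂ := congrArg (· ⬝ᵥ ux) hrow
  simp only [dotProduct_add, dotProduct_mulVec, dotProduct_smul, add_dotProduct,
    smul_dotProduct, smul_eq_mul, hcol] at h₁ h₂
  linear_combination h₁ - h₂ + b * hB

end Matrix

section Solution

variable {n : Type*} [Fintype n]

structure IsC1SolutionOn (A : Matrix n n ℝ) (g c : n → ℝ) (ε T : ℝ) (U : ℝ → ℝ → n → ℝ)
    (B : ℝ → ℝ → ℝ) (Ux Ut : ℝ → ℝ → n → ℝ) (Bx Bt : ℝ → ℝ → ℝ) : Prop where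
  hasDerivAt : ∀ x : ℝ, ∀ t ∈ Icc 0 T,
    HasDerivAt (fun x' => U x' t) (Ux x t) x ∧
    HasDerivWithinAt (fun t' => U x t') (Ut x t) (Icc 0 T) t ∧
    HasDerivAt (fun x' => B x' t) (Bx x t) x ∧
    HasDerivWithinAt (fun t' => B x t') (Bt x t) (Icc 0 T) t
  contDiffOn_U : ContDiffOn ℝ 1 (fun p : ℝ × ℝ => U p.1 p.2) (univ ×ˢ Icc 0 T)
  contDiffOn_B : ContDiffOn ℝ 1 (fun p : ℝ × ℝ => B p.1 p.2) (univ ×ˢ Icc 0 T)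
  eq : ∀ x : ℝ, ∀ t ∈ Icc 0 T,
    Ut x t + A *ᵥ Ux x t = -(Bx x t) • g ∧ Bt x t + ε * (c ⬝ᵥ Ux x t) = 0

variable {A : Matrix n n ℝ} {g c : n → ℝ} {ε T : ℝ} {U : ℝ → ℝ → n → ℝ} {B : ℝ → ℝ → ℝ}
  {Ux Ut : ℝ → ℝ → n → ℝ} {Bx Bt : ℝ → ℝ → ℝ}

theorem IsC1SolutionOn.transport_of_left_eigen (hs : IsC1SolutionOn A g c ε T U B Ux Ut Bx Bt)
    (hT : 0 < T) {r : n → ℝ} {b d : ℝ} (hrow : r ᵥ* A + (b * ε) • c = d • r)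
    (hcol : r ⬝ᵥ g = d * b) {x t : ℝ} (ht : t ∈ Icc 0 T) :
    r ⬝ᵥ Ux x t + b * Bx x t = r ⬝ᵥ Ux (x - d * t) 0 + b * Bx (x - d * t) 0 := by
  let φ : (n → ℝ) →L[ℝ] ℝ := LinearMap.toContinuousLinearMap (dotProductBilin ℝ ℝ r)
  refine hasDerivAt_eq_initial_of_transport (f := fun x t => r ⬝ᵥ U x t + b * B x t)
    (fx := fun x t => r ⬝ᵥ Ux x t + b * Bx x t) (ft := fun x t => r ⬝ᵥ Ut x t + b * Bt x t) hT
    ((φ.contDiff.comp_contDiffOn hs.contDiffOn_U).add (contDiffOn_const.mul hs.contDiffOn_B))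
    (fun x t ht => ?_) (fun x t ht => ?_) (fun x t ht => ?_) ht
  · obtain ⟨hU, -, hB, -⟩ := hs.hasDerivAt x t ht
    exact (φ.hasFDerivAt.comp_hasDerivAt x hU).add (hB.const_mul b)
  · obtain ⟨-, hU, -, hB⟩ := hs.hasDerivAt x t ht
    exact (φ.hasFDerivAt.comp_hasDerivWithinAt t hU).add (hB.const_mul b)
  · exact dotProduct_transport_of_left_eigen hrow hcol (hs.eq x t ht).1 (hs.eq x t ht).2

variable [DecidableEq n] {X Xhat : Matrix n n ℝ} {lam αhat : n → ℝ}

theorem IsC1SolutionOn.abs_mulVec_le (hs : IsC1SolutionOn A g c ε T U B Ux Ut Bx Bt)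
    (hT : 0 < T) (hε : 0 ≤ ε) {i : n} {b d K : ℝ} (hXA : X * A = diagonal lam * X)
    (hrow : (X + ε • Xhat) i ᵥ* A + (b * ε) • c = d • (X + ε • Xhat) i)
    (hcol : (X + ε • Xhat) i ⬝ᵥ g = d * b) (hb : lam i * b = (X *ᵥ g) i + ε * (lam i * αhat i))
    (hK : ∀ x, ∀ t ∈ Icc 0 T, |Xhat i ⬝ᵥ Ux x t + αhat i * Bx x t| ≤ K)
    {x t : ℝ} (ht : t ∈ Icc 0 T) :
    |(X *ᵥ (A *ᵥ Ux x t + Bx x t • g)) i| ≤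
      |(X *ᵥ (A *ᵥ Ux (x - d * t) 0 + Bx (x - d * t) 0 • g)) i| + ε * |lam i| * (2 * K) := by
  have htransport := congrArg (lam i * ·) (hs.transport_of_left_eigen hT hrow hcol (x := x) ht)
  simp only [mul_perturbed_row_dotProduct_eq hXA hb] at htransport
  set x₀ := x - d * t
  set P : ℝ → ℝ → ℝ := fun x t => Xhat i ⬝ᵥ Ux x t + αhat i * Bx x t
  calc _ = |(X *ᵥ (A *ᵥ Ux x₀ 0 + Bx x₀ 0 • g)) i + ε * lam i * (P x₀ 0 - P x t)| := by
        congr 1; linear_combination htransport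
    _ ≤ |(X *ᵥ (A *ᵥ Ux x₀ 0 + Bx x₀ 0 • g)) i| + ε * |lam i| * (|P x₀ 0| + |P x t|) := by
        grw [abs_add_le, abs_mul, abs_mul, abs_of_nonneg hε, abs_sub]
    _ ≤ _ := by
        grw [hK x₀ 0 (left_mem_Icc.2 hT.le), hK x t ht, two_mul]

theorem IsC1SolutionOn.norm_mulVec_le (hs : IsC1SolutionOn A g c ε T U B Ux Ut Bx Bt)
    (hT : 0 < T) (hε : 0 ≤ ε) {b d : n → ℝ} {K₀ K : ℝ} (hXA : X * A = diagonal lam * X)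
    (hrow : ∀ i, (X + ε • Xhat) i ᵥ* A + (b i * ε) • c = d i • (X + ε • Xhat) i)
    (hcol : ∀ i, (X + ε • Xhat) i ⬝ᵥ g = d i * b i)
    (hb : ∀ i, lam i * b i = (X *ᵥ g) i + ε * (lam i * αhat i)) (hK : 0 ≤ K)
    (hP : ∀ i, ∀ x, ∀ t ∈ Icc 0 T, |Xhat i ⬝ᵥ Ux x t + αhat i * Bx x t| ≤ K)
    (h₀ : ∀ x, ‖X *ᵥ (A *ᵥ Ux x 0 + Bx x 0 • g)‖ ≤ K₀) {x t : ℝ} (ht : t ∈ Icc 0 T) :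
    ‖X *ᵥ (A *ᵥ Ux x t + Bx x t • g)‖ ≤ K₀ + ε * ‖lam‖ * (2 * K) := by
  refine (pi_norm_le_iff_of_nonneg ?_).mpr fun i => ?_
  · have := (norm_nonneg _).trans (h₀ x)
    positivity
  grw [Real.norm_eq_abs, hs.abs_mulVec_le hT hε hXA (hrow i) (hcol i) (hb i) (hP i) ht,
    ← Real.norm_eq_abs, norm_le_pi_norm, h₀]
  gcongr
  exact norm_le_pi_norm lam i

end Solution

theorem stmt_8_general (l : ℕ) (A X : Matrix (Fin l) (Fin l) ℝ) (lam : Fin l → ℝ)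
    (g c : Fin l → ℝ) (δ : ℝ) (hδ : 0 < δ)
    (hX : IsUnit X) (hA : A = X⁻¹ * Matrix.diagonal lam * X)
    (hlam : ∀ i : Fin l, δ ≤ |lam i|)
    (M T₀ : ℝ) (hM : 0 < M) (hT₀ : 0 < T₀) :
    ∃ C > 0, ∃ ε₀ > 0, ∀ ε : ℝ, 0 < ε → ε ≤ ε₀ →
      ∀ (Xhat : Matrix (Fin l) (Fin l) ℝ) (αhat βhat lamhat : Fin l → ℝ)
        (θhat μ : ℝ) (Kmat Dmat : Matrix (Fin l ⊕ Unit) (Fin l ⊕ Unit) ℝ),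
        -- the perturbed eigenvector and eigenvalue matrices K^ε and D^ε
        Kmat = Matrix.fromBlocks (X + ε • Xhat)
            (Matrix.of fun i _ =>
              (Matrix.diagonal lam)⁻¹.mulVec (X.mulVec g) i + ε * αhat i)
            (Matrix.of fun _ j => ε * βhat j)
            (Matrix.of fun _ _ => 1 + ε * θhat) →
        Dmat = Matrix.fromBlocks
            (Matrix.diagonal lam + ε • Matrix.diagonal lamhat) 0 0
            (Matrix.of fun _ _ => ε * μ) →
        IsUnit Kmat →
        -- the exact similarity C^ε = (K^ε)⁻¹ D^ε K^ε
        Matrix.fromBlocks A (Matrix.of fun i _ => g i)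
            (Matrix.of fun _ j => ε * c j) 0 = Kmat⁻¹ * Dmat * Kmat →
        -- the perturbation quantities and (K^ε)⁻¹ are bounded by M
        (∀ i j, |Xhat i j| ≤ M) → (∀ i, |αhat i| ≤ M) → (∀ i, |βhat i| ≤ M) →
        (∀ i, |lamhat i| ≤ M) → |θhat| ≤ M → |μ| ≤ M →
        (∀ i j, |Kmat⁻¹ i j| ≤ M) →
        ∀ (U : ℝ → ℝ → Fin l → ℝ) (B : ℝ → ℝ → ℝ)
          (Ux Ut : ℝ → ℝ → Fin l → ℝ) (Bx Bt : ℝ → ℝ → ℝ),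
          -- (U, B) is a C¹ classical solution on ℝ × [0, T₀/ε]
          (∀ x : ℝ, ∀ t ∈ Icc (0 : ℝ) (T₀ / ε),
            HasDerivAt (fun x' => U x' t) (Ux x t) x ∧
            HasDerivWithinAt (fun t' => U x t') (Ut x t) (Icc 0 (T₀ / ε)) t ∧
            HasDerivAt (fun x' => B x' t) (Bx x t) x ∧
            HasDerivWithinAt (fun t' => B x t') (Bt x t) (Icc 0 (T₀ / ε)) t) →
          -- joint C¹ regularity of the solution on ℝ × [0, T₀/ε]
          ContDiffOn ℝ 1 (fun p : ℝ × ℝ => U p.1 p.2)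
            (univ ×ˢ Icc (0:ℝ) (T₀ / ε)) →
          ContDiffOn ℝ 1 (fun p : ℝ × ℝ => B p.1 p.2)
            (univ ×ˢ Icc (0:ℝ) (T₀ / ε)) →
          -- boundedness of the solution
          (∃ K : ℝ, ∀ x : ℝ, ∀ t ∈ Icc (0 : ℝ) (T₀ / ε),
            ‖U x t‖ ≤ K ∧ |B x t| ≤ K) →
          -- first-order partial derivatives bounded by M
          (∀ x : ℝ, ∀ t ∈ Icc (0 : ℝ) (T₀ / ε),
            ‖Ux x t‖ ≤ M ∧ ‖Ut x t‖ ≤ M ∧ |Bx x t| ≤ M ∧ |Bt x t| ≤ M) →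
          -- the linear hyperbolic system
          (∀ x : ℝ, ∀ t ∈ Icc (0 : ℝ) (T₀ / ε),
            Ut x t + A.mulVec (Ux x t) = -(Bx x t) • g ∧
            Bt x t + ε * (c ⬝ᵥ Ux x t) = 0) →
          -- approximate steadiness of the initial data
          (∀ x : ℝ, ‖A.mulVec (Ux x 0) + Bx x 0 • g‖ ≤ M * ε) →
          ∀ x : ℝ, ∀ t ∈ Icc (0 : ℝ) (T₀ / ε),
            ‖A.mulVec (Ux x t) + Bx x t • g‖ ≤ C * ε ∧
            ‖Ut x t‖ ≤ C * ε := by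
  obtain ⟨KX, hKX, hXv⟩ := X.exists_norm_mulVec_le
  obtain ⟨KXi, hKXi, hXiv⟩ := X⁻¹.exists_norm_mulVec_le
  have hlam0 : ∀ i, lam i ≠ 0 := fun i => abs_pos.mp (hδ.trans_le (hlam i))
  set K := ((l : ℝ) + 1) * (M * M)
  set C := KXi * (KX * M + ‖lam‖ * (2 * K)) + 1
  refine ⟨C, by positivity, 1, one_pos, ?_⟩
  intro ε hε _ Xhat αhat βhat lamhat θhat μ Kmat Dmat hKmat hDmat hKunit hsim hXhat hαhat
    _ _ _ _ _ U B Ux Ut Bx Bt hderiv hUC1 hBC1 _ hbounds hsys hinit x t ht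
  have hs : IsC1SolutionOn A g c ε (T₀ / ε) U B Ux Ut Bx Bt := ⟨hderiv, hUC1, hBC1, hsys⟩
  have hKC := mul_eq_mul_of_eq_nonsing_inv_mul_mul hKunit hsim
  rw [hKmat, hDmat, ← diagonal_smul, diagonal_add] at hKC
  have hXW := hs.norm_mulVec_le (αhat := αhat) (K := K) (div_pos hT₀ hε) hε.le
    (mul_eq_mul_of_eq_nonsing_inv_mul_mul hX hA)
    (fun i => (vecMul_eq_and_dotProduct_eq_of_fromBlocks_mul_eq hKC i).1)
    (fun i => (vecMul_eq_and_dotProduct_eq_of_fromBlocks_mul_eq hKC i).2)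
    (fun i => by rw [mul_add, mul_inv_diagonal_mulVec_apply hlam0]; ring) (by positivity)
    (fun i x t ht => by
      simpa [K] using abs_dotProduct_add_mul_le (hXhat i) (hbounds x t ht).1 (hαhat i)
        (hbounds x t ht).2.2.1)
    (fun x => (hXv _).trans (mul_le_mul_of_nonneg_left (hinit x) hKX)) (x := x) ht
  have hW : ‖A *ᵥ Ux x t + Bx x t • g‖ ≤ C * ε :=
    calc _ = ‖X⁻¹ *ᵥ (X *ᵥ (A *ᵥ Ux x t + Bx x t • g))‖ := by
          rw [mulVec_mulVec, nonsing_inv_mul _ ((isUnit_iff_isUnit_det X).mp hX), one_mulVec]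
      _ ≤ KXi * (KX * (M * ε) + ε * ‖lam‖ * (2 * K)) := (hXiv _).trans (by gcongr)
      _ ≤ C * ε := by nlinarith
  have hUt : Ut x t = -(A *ᵥ Ux x t + Bx x t • g) := by
    rw [neg_add, ← neg_smul, ← (hsys x t ht).1]
    abel
  exact ⟨hW, by rwa [hUt, norm_neg]⟩

/-- Propagation of approximate steadiness (intermediate claim in the proof of
Lemma 1): under the eigenvalue-perturbation decomposition
`C^ε = (K^ε)⁻¹ D^ε K^ε` of the coupled matrix, with all perturbation
quantities bounded by `M`, an initially `O(ε)`-steady bounded `C¹` solution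
of `U_t + A U_x = −g B_x`, `B_t + ε cᵀ U_x = 0` stays `O(ε)`-steady on
`ℝ × [0, T₀/ε]`:  `|A U_x + g B_x| ≤ C ε`, equivalently `|U_t| ≤ C ε`. -/
theorem stmt_8 (l : ℕ) (A X : Matrix (Fin l) (Fin l) ℝ) (lam : Fin l → ℝ)
    (g c : Fin l → ℝ) (δ : ℝ) (hδ : 0 < δ)
    (hX : IsUnit X) (hA : A = X⁻¹ * Matrix.diagonal lam * X)
    (hdistinct : ∀ i j : Fin l, i ≠ j → lam i ≠ lam j)
    (hlam : ∀ i : Fin l, δ ≤ |lam i|)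
    (M T₀ : ℝ) (hM : 0 < M) (hT₀ : 0 < T₀) :
    ∃ C > 0, ∃ ε₀ > 0, ∀ ε : ℝ, 0 < ε → ε ≤ ε₀ →
      ∀ (Xhat : Matrix (Fin l) (Fin l) ℝ) (αhat βhat lamhat : Fin l → ℝ)
        (θhat μ : ℝ) (Kmat Dmat : Matrix (Fin l ⊕ Unit) (Fin l ⊕ Unit) ℝ),
        -- the perturbed eigenvector and eigenvalue matrices K^ε and D^ε
        Kmat = Matrix.fromBlocks (X + ε • Xhat)
            (Matrix.of fun i _ =>
              (Matrix.diagonal lam)⁻¹.mulVec (X.mulVec g) i + ε * αhat i)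
            (Matrix.of fun _ j => ε * βhat j)
            (Matrix.of fun _ _ => 1 + ε * θhat) →
        Dmat = Matrix.fromBlocks
            (Matrix.diagonal lam + ε • Matrix.diagonal lamhat) 0 0
            (Matrix.of fun _ _ => ε * μ) →
        IsUnit Kmat →
        -- the exact similarity C^ε = (K^ε)⁻¹ D^ε K^ε
        Matrix.fromBlocks A (Matrix.of fun i _ => g i)
            (Matrix.of fun _ j => ε * c j) 0 = Kmat⁻¹ * Dmat * Kmat →
        -- the perturbation quantities and (K^ε)⁻¹ are bounded by M
        (∀ i j, |Xhat i j| ≤ M) → (∀ i, |αhat i| ≤ M) → (∀ i, |βhat i| ≤ M) →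
        (∀ i, |lamhat i| ≤ M) → |θhat| ≤ M → |μ| ≤ M →
        (∀ i j, |Kmat⁻¹ i j| ≤ M) →
        ∀ (U : ℝ → ℝ → Fin l → ℝ) (B : ℝ → ℝ → ℝ)
          (Ux Ut : ℝ → ℝ → Fin l → ℝ) (Bx Bt : ℝ → ℝ → ℝ),
          -- (U, B) is a C¹ classical solution on ℝ × [0, T₀/ε]
          (∀ x : ℝ, ∀ t ∈ Icc (0 : ℝ) (T₀ / ε),
            HasDerivAt (fun x' => U x' t) (Ux x t) x ∧
            HasDerivWithinAt (fun t' => U x t') (Ut x t) (Icc 0 (T₀ / ε)) t ∧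
            HasDerivAt (fun x' => B x' t) (Bx x t) x ∧
            HasDerivWithinAt (fun t' => B x t') (Bt x t) (Icc 0 (T₀ / ε)) t) →
          -- joint C¹ regularity of the solution on ℝ × [0, T₀/ε]
          ContDiffOn ℝ 1 (fun p : ℝ × ℝ => U p.1 p.2)
            (univ ×ˢ Icc (0:ℝ) (T₀ / ε)) →
          ContDiffOn ℝ 1 (fun p : ℝ × ℝ => B p.1 p.2)
            (univ ×ˢ Icc (0:ℝ) (T₀ / ε)) →
          -- boundedness of the solution
          (∃ K : ℝ, ∀ x : ℝ, ∀ t ∈ Icc (0 : ℝ) (T₀ / ε),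
            ‖U x t‖ ≤ K ∧ |B x t| ≤ K) →
          -- first-order partial derivatives bounded by M
          (∀ x : ℝ, ∀ t ∈ Icc (0 : ℝ) (T₀ / ε),
            ‖Ux x t‖ ≤ M ∧ ‖Ut x t‖ ≤ M ∧ |Bx x t| ≤ M ∧ |Bt x t| ≤ M) →
          -- the linear hyperbolic system
          (∀ x : ℝ, ∀ t ∈ Icc (0 : ℝ) (T₀ / ε),
            Ut x t + A.mulVec (Ux x t) = -(Bx x t) • g ∧
            Bt x t + ε * (c ⬝ᵥ Ux x t) = 0) →
          -- approximate steadiness of the initial data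
          (∀ x : ℝ, ‖A.mulVec (Ux x 0) + Bx x 0 • g‖ ≤ M * ε) →
          ∀ x : ℝ, ∀ t ∈ Icc (0 : ℝ) (T₀ / ε),
            ‖A.mulVec (Ux x t) + Bx x t • g‖ ≤ C * ε ∧
            ‖Ut x t‖ ≤ C * ε :=
  stmt_8_general l A X lam g c δ hδ hX hA hlam M T₀ hM hT₀
end
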